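/- arXiv:2105.01273 — 2 statements merged into one kernel-verified Lean document; each statement's English description precedes it below -/
import Mathlib

section
/- For every matrix X in M_n(ℝ), the transpose Xᵀ is conjugate to X by some element of GL_n(ℝ); that is, there exists P ∈ GL_n(ℝ) with Xᵀ = P X P⁻¹. -/
/-!
Let `A` be a commutative algebra with a linear functional `Λ` such that `(x, y) ↦ Λ (x * y)`
is nondegenerate. Multiplication by any `a : A` is self-adjoint for this form, so if `X` acts
as multiplication by `a` in some basis, then the Gram matrix `J` of the form is invertible and
satisfies `Xᵀ J = J X`. By the structure theorem for finitely generated torsion `K[X]`-modules,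
every `X` does act this way on a product of algebras `K[X] ⧸ (g)` with `g` monic, and on
`K[X] ⧸ (g)` the coefficient of `X ^ (deg g - 1)` is such a functional.
-/

open Polynomial Matrix

universe u

namespace AdjoinRoot

variable {R : Type*} [CommRing R] {g : R[X]}

noncomputable def topCoeff (hg : g.Monic) : AdjoinRoot g →ₗ[R] R :=
  (lcoeff R (g.natDegree - 1)).comp (modByMonicHom hg)

@[simp]
theorem topCoeff_mk (hg : g.Monic) (p : R[X]) :
    topCoeff hg (mk g p) = (p %ₘ g).coeff (g.natDegree - 1) := rfl

theorem separatingLeft_mul_compr₂_topCoeff (hg : g.Monic) :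
    ((LinearMap.mul R (AdjoinRoot g)).compr₂ (topCoeff hg)).SeparatingLeft := by
  intro x hx
  nontriviality R using Module.subsingleton R (AdjoinRoot g)
  obtain ⟨p, rfl⟩ := mk_surjective x
  set r := p %ₘ g
  have hrp : mk g r = mk g p := mk_leftInverse hg (mk g p)
  by_contra hp
  have hr0 : r ≠ 0 := by rintro h; exact hp (by rw [← hrp, h, map_zero])
  have hrd : r.natDegree < g.natDegree :=
    natDegree_lt_natDegree hr0 (degree_modByMonic_lt p hg)
  -- Shifting `r` up to degree `deg g - 1` moves its leading coefficient into the top slot.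
  set j := g.natDegree - 1 - r.natDegree
  have hred : (r * X ^ j) %ₘ g = r * X ^ j := by
    refine (modByMonic_eq_self_iff hg).mpr (degree_lt_degree ?_)
    rw [natDegree_mul_X_pow j hr0]
    omega
  have := hx (root g ^ j)
  simp only [LinearMap.compr₂_apply, LinearMap.mul_apply'] at this
  rw [← hrp, ← mk_X, ← map_pow, ← map_mul, topCoeff_mk, hred,
    show g.natDegree - 1 = r.natDegree + j by omega, coeff_mul_X_pow] at this
  exact hr0 (leadingCoeff_eq_zero.mp this)

end AdjoinRoot

theorem LinearMap.separatingLeft_mul_compr₂_pi {R ι : Type*} [CommRing R] [Fintype ι]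
    [DecidableEq ι] {A : ι → Type*} [∀ i, CommRing (A i)] [∀ i, Algebra R (A i)]
    {Λ : ∀ i, A i →ₗ[R] R} (hΛ : ∀ i, ((LinearMap.mul R (A i)).compr₂ (Λ i)).SeparatingLeft) :
    ((LinearMap.mul R (∀ i, A i)).compr₂ (∑ i, Λ i ∘ₗ LinearMap.proj i)).SeparatingLeft := by
  intro x hx
  funext i
  refine hΛ i (x i) fun y => ?_
  have hy := hx (Pi.single i y)
  rw [LinearMap.compr₂_apply, LinearMap.coe_sum, Finset.sum_apply,
    Fintype.sum_eq_single i fun j hj => by simp [Pi.single_eq_of_ne hj]] at hy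
  simpa using hy

theorem Module.End.exists_linearEquiv_pi_adjoinRoot {K : Type u} {V : Type*} [Field K]
    [AddCommGroup V] [Module K V] [FiniteDimensional K V] (f : Module.End K V) :
    ∃ (ι : Type u) (_ : Fintype ι) (g : ι → K[X]) (_ : ∀ i, (g i).Monic)
      (θ : V ≃ₗ[K] ∀ i, AdjoinRoot (g i)),
        ∀ v, θ (f v) = (fun i => AdjoinRoot.root (g i)) * θ v := by
  classical
  obtain ⟨ι, _, p, hp, e, ⟨ψ⟩⟩ :=
    Module.equiv_directSum_of_isTorsion (Module.AEval.isTorsion_of_finiteDimensional K V f)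
  let g i := normalize (p i ^ e i)
  have hspan i : K[X] ∙ p i ^ e i = Ideal.span {g i} :=
    Ideal.span_singleton_eq_span_singleton.mpr (associated_normalize _)
  let φ : (∀ i, K[X] ⧸ K[X] ∙ p i ^ e i) ≃ₗ[K[X]] ∀ i, K[X] ⧸ Ideal.span {g i} :=
    LinearEquiv.piCongrRight fun i => Submodule.quotEquivOfEq _ _ (hspan i)
  let θ := ψ.trans ((DirectSum.linearEquivFunOnFintype _ _ _).trans φ)
  have hθ (v : V) : θ (Module.AEval'.of f (f v)) =
      (fun i => Ideal.Quotient.mk (Ideal.span {g i}) X) * θ (Module.AEval'.of f v) := by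
    rw [← Module.AEval'.X_smul_of, θ.map_smul]
    funext i
    obtain ⟨y, hy⟩ := Ideal.Quotient.mk_surjective (θ (Module.AEval'.of f v) i)
    rw [Pi.smul_apply, Pi.mul_apply, ← hy]
    rfl
  exact ⟨ι, inferInstance, g, fun i => monic_normalize (pow_ne_zero _ (hp i).ne_zero),
    (Module.AEval'.of f).trans (θ.restrictScalars K), hθ⟩

section

variable {K n : Type*} [Field K] [Fintype n] [DecidableEq n]

theorem Matrix.exists_transpose_eq_conj_of_isAdjointPair {X : Matrix n n K}
    {B : LinearMap.BilinForm K (n → K)} (hB : B.SeparatingLeft)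
    (hX : B.IsAdjointPair B (toLin' X) (toLin' X)) :
    ∃ P : GL n K, Xᵀ = P * X * P⁻¹ := by
  rw [← Matrix.toLinearMap₂'_toMatrix' (R := K) B] at hB hX
  set J := LinearMap.toMatrix₂' K B
  have hJ : IsUnit J.det := (LinearMap.separatingLeft_toLinearMap₂'_iff_det_ne_zero.mp hB).isUnit
  have hXJ : Xᵀ * J = J * X := (isAdjointPair_toLinearMap₂' J J X X).mp hX
  refine ⟨((isUnit_iff_isUnit_det J).mpr hJ).unit, ?_⟩
  simp [← hXJ, mul_assoc, mul_nonsing_inv J hJ]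

theorem Matrix.exists_transpose_eq_conj_of_intertwines {A : Type*} [CommRing A] [Algebra K A]
    {Λ : A →ₗ[K] K} (hΛ : ((LinearMap.mul K A).compr₂ Λ).SeparatingLeft) {X : Matrix n n K}
    {a : A} (θ : (n → K) ≃ₗ[K] A) (hθ : ∀ v, θ (X *ᵥ v) = a * θ v) :
    ∃ P : GL n K, Xᵀ = P * X * P⁻¹ := by
  refine exists_transpose_eq_conj_of_isAdjointPair (hΛ.congr θ.symm θ.symm) fun v w => ?_
  simp [hθ, mul_assoc, mul_left_comm]

theorem Matrix.exists_transpose_eq_conj (X : Matrix n n K) : ∃ P : GL n K, Xᵀ = P * X * P⁻¹ := by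
  obtain ⟨ι, _, g, hg, θ, hθ⟩ := Module.End.exists_linearEquiv_pi_adjoinRoot (toLin' X)
  classical
  exact exists_transpose_eq_conj_of_intertwines
    (LinearMap.separatingLeft_mul_compr₂_pi fun i =>
      AdjoinRoot.separatingLeft_mul_compr₂_topCoeff (hg i)) θ hθ

end

/-- Every real square matrix is conjugate to its transpose by an element of `GL n ℝ`. -/
theorem transpose_conjugate (n : ℕ) (X : Matrix (Fin n) (Fin n) ℝ) :
    ∃ P : GL (Fin n) ℝ, Xᵀ = (P : Matrix (Fin n) (Fin n) ℝ) * X *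
      ((P⁻¹ : GL (Fin n) ℝ) : Matrix (Fin n) (Fin n) ℝ) :=
  Matrix.exists_transpose_eq_conj X
end

section
/- Every element g of the real orthogonal group O(n) is conjugate in O(n) to its inverse g⁻¹ = gᵀ. -/
/-!
For an isometry `g` of a finite-dimensional real inner product space, `g + g⁻¹` is self-adjoint,
so every nonzero subspace invariant under `g` and `g⁻¹` contains an eigenvector `v`,
`g v + g⁻¹ v = μ v`. The plane `W = span {v, g v}` is then invariant (`g (g v) = μ g v - v`),
and the reflection exchanging `v` and `g v` conjugates `g` to `g⁻¹` on `W` while fixing `Wᗮ`.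
Splitting off such planes one at a time and composing the reflections conjugates `g` to `g⁻¹`.
Orthogonal matrices are exactly the isometries of Euclidean space.
-/

open Matrix

namespace LinearIsometryEquiv

open Submodule

variable {E : Type*} [NormedAddCommGroup E] [InnerProductSpace ℝ E]

def IsInvariant (g : E ≃ₗᵢ[ℝ] E) (K : Submodule ℝ E) : Prop :=
  ∀ x ∈ K, g x ∈ K ∧ g.symm x ∈ K

/-- Fixing `Kᗮ` pointwise is what lets reversers of orthogonal pieces be composed. -/
def ReversesOn (h g : E ≃ₗᵢ[ℝ] E) (K : Submodule ℝ E) : Prop :=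
  (∀ x ∈ K, h (g x) = g.symm (h x)) ∧ ∀ x ∈ Kᗮ, h x = x

variable {g : E ≃ₗᵢ[ℝ] E} {K W : Submodule ℝ E}

theorem IsInvariant.orthogonal (hK : g.IsInvariant K) : g.IsInvariant Kᗮ := by
  intro x hx
  refine ⟨(mem_orthogonal _ _).2 fun y hy ↦ ?_, (mem_orthogonal _ _).2 fun y hy ↦ ?_⟩
  · rw [← g.apply_symm_apply y, g.inner_map_map]
    exact inner_right_of_mem_orthogonal (hK y hy).2 hx
  · rw [← g.symm_apply_apply y, g.symm.inner_map_map]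
    exact inner_right_of_mem_orthogonal (hK y hy).1 hx

theorem IsInvariant.inf (hK : g.IsInvariant K) (hW : g.IsInvariant W) :
    g.IsInvariant (K ⊓ W) :=
  fun x hx ↦ ⟨⟨(hK x hx.1).1, (hW x hx.2).1⟩, ⟨(hK x hx.1).2, (hW x hx.2).2⟩⟩

theorem apply_mem_of_forall_mem_orthogonal_apply_eq [K.HasOrthogonalProjection]
    {h : E ≃ₗᵢ[ℝ] E} (hK : ∀ y ∈ Kᗮ, h y = y) {x : E} (hx : x ∈ K) : h x ∈ K := by
  rw [← K.orthogonal_orthogonal]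
  refine (mem_orthogonal _ _).2 fun y hy ↦ ?_
  rw [← hK y hy, h.inner_map_map]
  exact inner_left_of_mem_orthogonal hx hy

section eigenvector

variable {v : E} {μ : ℝ}

theorem apply_apply_eq_of_add_symm_eq (hv : g v + g.symm v = μ • v) :
    g (g v) = μ • g v - v := by
  rw [eq_sub_iff_add_eq, ← map_smul, ← hv, map_add, apply_symm_apply]

theorem symm_apply_eq_of_add_symm_eq (hv : g v + g.symm v = μ • v) :
    g.symm v = μ • v - g v := by
  rw [← hv, add_sub_cancel_left]

theorem isInvariant_span_pair (hv : g v + g.symm v = μ • v) :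
    g.IsInvariant (span ℝ {v, g v}) := by
  intro x hx
  obtain ⟨a, b, rfl⟩ := mem_span_pair.1 hx
  refine ⟨mem_span_pair.2 ⟨-b, a + b * μ, ?_⟩, mem_span_pair.2 ⟨a * μ + b, -a, ?_⟩⟩
  · simp [apply_apply_eq_of_add_symm_eq hv]
    module
  · simp [symm_apply_eq_of_add_symm_eq hv]
    module

theorem reversesOn_span_pair (hv : g v + g.symm v = μ • v) :
    (ℝ ∙ (v - g v))ᗮ.reflection.ReversesOn g (span ℝ {v, g v}) := by
  set r := (ℝ ∙ (v - g v))ᗮ.reflection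
  have hrv : r v = g v := reflection_sub (g.norm_map v).symm
  have hrgv : r (g v) = v := by rw [← hrv, reflection_reflection]
  refine ⟨fun x hx ↦ ?_, fun x hx ↦ reflection_mem_subspace_eq_self ?_⟩
  · obtain ⟨a, b, rfl⟩ := mem_span_pair.1 hx
    simp [apply_apply_eq_of_add_symm_eq hv, symm_apply_eq_of_add_symm_eq hv, hrv, hrgv]
  · refine orthogonal_le ((span_singleton_le_iff_mem _ _).2 ?_) hx
    exact sub_mem (subset_span (by simp)) (subset_span (by simp))

end eigenvector

theorem IsInvariant.exists_add_symm_eq_smul [FiniteDimensional ℝ E] (hK : g.IsInvariant K)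
    (hK0 : K ≠ ⊥) : ∃ v ∈ K, v ≠ 0 ∧ ∃ μ : ℝ, g v + g.symm v = μ • v := by
  let S : E →ₗ[ℝ] E := g.toLinearEquiv.toLinearMap + g.symm.toLinearEquiv.toLinearMap
  have hS : S.IsSymmetric := fun x y ↦ by
    simp [S, inner_add_left, inner_add_right, inner_map_eq_flip, add_comm]
  have hSK : ∀ x ∈ K, S x ∈ K := fun x hx ↦ K.add_mem (hK x hx).1 (hK x hx).2
  have : Nontrivial K := nontrivial_iff_ne_bot.2 hK0
  obtain ⟨w, hw⟩ :=
    (hS.restrict_invariant hSK).hasEigenvalue_iSup_of_finiteDimensional.exists_hasEigenvector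
  exact ⟨w, w.2, by simpa using hw.2, _,
    by simpa [S] using congr_arg Subtype.val (Module.End.mem_eigenspace_iff.1 hw.1)⟩

theorem ReversesOn.trans_orthogonal_inf {r h : E ≃ₗᵢ[ℝ] E} [W.HasOrthogonalProjection]
    [(Wᗮ ⊓ K).HasOrthogonalProjection] (hr : r.ReversesOn g W) (hh : h.ReversesOn g (Wᗮ ⊓ K))
    (hWK : W ≤ K) (hW : g.IsInvariant W) (hK' : g.IsInvariant (Wᗮ ⊓ K)) :
    (h.trans r).ReversesOn g K := by
  have hWK' : W ≤ (Wᗮ ⊓ K)ᗮ := (le_orthogonal_orthogonal W).trans (orthogonal_le inf_le_left)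
  refine ⟨fun x hx ↦ ?_, fun x hx ↦ ?_⟩
  · rw [← sup_orthogonal_inf_of_hasOrthogonalProjection hWK] at hx
    obtain ⟨y, hy, z, hz, rfl⟩ := mem_sup.1 hx
    have hhz : h z ∈ Wᗮ ⊓ K := apply_mem_of_forall_mem_orthogonal_apply_eq hh.2 hz
    simp only [trans_apply, map_add]
    rw [hh.2 _ (hWK' (hW y hy).1), hh.2 y (hWK' hy), hr.1 y hy, hh.1 z hz,
      hr.2 _ (hK' _ hhz).2.1, hr.2 _ hhz.1]
  · simp [hh.2 x (orthogonal_le inf_le_right hx), hr.2 x (orthogonal_le hWK hx)]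

variable [FiniteDimensional ℝ E]

theorem IsInvariant.exists_reversesOn (hK : g.IsInvariant K) :
    ∃ h : E ≃ₗᵢ[ℝ] E, h.ReversesOn g K := by
  induction K using WellFoundedLT.induction with
  | ind K ih =>
  rcases eq_or_ne K ⊥ with rfl | hK0
  · exact ⟨.refl ℝ E, fun x hx ↦ by simp [(mem_bot ℝ).1 hx], fun x _ ↦ rfl⟩
  obtain ⟨v, hvK, hv0, μ, hv⟩ := hK.exists_add_symm_eq_smul hK0
  have hW := isInvariant_span_pair hv
  have hWK : span ℝ {v, g v} ≤ K := by
    simp [span_le, Set.insert_subset_iff, hvK, (hK v hvK).1]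
  have hlt : (span ℝ {v, g v})ᗮ ⊓ K < K := by
    refine inf_le_right.lt_of_ne fun heq ↦ hv0 ?_
    have hv' : v ∈ (span ℝ {v, g v})ᗮ := (heq.symm ▸ hvK : v ∈ _ ⊓ K).1
    exact inner_self_eq_zero.1 (inner_right_of_mem_orthogonal (subset_span (by simp)) hv')
  have hK' := hW.orthogonal.inf hK
  obtain ⟨h, hh⟩ := ih _ hlt hK'
  exact ⟨h.trans _, (reversesOn_span_pair hv).trans_orthogonal_inf hh hWK hW hK'⟩

theorem isConj_inv (g : E ≃ₗᵢ[ℝ] E) : IsConj g g⁻¹ := by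
  have htop : g.IsInvariant ⊤ := fun _ _ ↦ ⟨trivial, trivial⟩
  obtain ⟨h, hh, -⟩ := htop.exists_reversesOn
  refine isConj_iff.2 ⟨h, ?_⟩
  ext x
  simp [mul_def, inv_def, hh _ trivial]

end LinearIsometryEquiv

namespace Matrix

noncomputable def orthogonalGroupEquiv (n : Type*) [Fintype n] [DecidableEq n] :
    orthogonalGroup n ℝ ≃* (EuclideanSpace ℝ n ≃ₗᵢ[ℝ] EuclideanSpace ℝ n) :=
  (Unitary.mapEquiv (.ofClass (toEuclideanCLM (n := n) (𝕜 := ℝ)))).toMulEquiv.trans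
    Unitary.linearIsometryEquiv

theorem orthogonalGroup.isConj_inv {n : Type*} [Fintype n] [DecidableEq n]
    (g : orthogonalGroup n ℝ) : IsConj g g⁻¹ := by
  let e := orthogonalGroupEquiv n
  simpa only [map_inv, MulEquiv.coe_toMonoidHom, MulEquiv.symm_apply_apply] using
    e.symm.toMonoidHom.map_isConj (e g).isConj_inv

end Matrix

/-- Every element of the real orthogonal group `O(n)` is conjugate in `O(n)` to its inverse. -/
theorem orthogonal_conj_inv (n : ℕ) (g : Matrix.orthogonalGroup (Fin n) ℝ) :
    ∃ h : Matrix.orthogonalGroup (Fin n) ℝ, g⁻¹ = h * g * h⁻¹ := by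
  obtain ⟨h, hh⟩ := isConj_iff.1 (orthogonalGroup.isConj_inv g)
  exact ⟨h, hh.symm⟩
end
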